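/- arXiv:1306.2391 — 2 statements merged into one kernel-verified Lean document; each statement's English description precedes it below -/
import Mathlib

section
/- The abelianization of the group presented by generators x, y with relations x^3 = y^5 and x^3 = (x*y)^2 is the trivial group. -/
/-- Presentation ⟨x, y | x³ = y⁵, x³ = (xy)²⟩ of the fundamental group of the
    Poincaré homology sphere, with x = of 0, y = of 1. -/
def poincareRels : Set (FreeGroup (Fin 2)) :=
  {(FreeGroup.of 0) ^ 3 * ((FreeGroup.of 1) ^ 5)⁻¹,
   (FreeGroup.of 0) ^ 3 * (((FreeGroup.of 0) * (FreeGroup.of 1)) ^ 2)⁻¹}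

theorem stmt9 : Subsingleton (Abelianization (PresentedGroup poincareRels)) := by
  let φ : FreeGroup (Fin 2) →* Abelianization (PresentedGroup poincareRels) :=
    Abelianization.of.comp (QuotientGroup.mk' _)
  have hrel : ∀ r ∈ poincareRels, φ r = 1 := by
    intro r hr
    have h : (QuotientGroup.mk' (Subgroup.normalClosure poincareRels)) r = 1 := by
      rw [QuotientGroup.mk'_apply, QuotientGroup.eq_one_iff]
      exact Subgroup.subset_normalClosure hr
    show Abelianization.of _ = 1
    erw [h, map_one]
  set a := φ (FreeGroup.of 0) with ha
  set b := φ (FreeGroup.of 1) with hb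
  have h1 : a ^ 3 = b ^ 5 := by
    have h := hrel _ (Or.inl rfl)
    rw [map_mul, map_pow, map_inv, map_pow] at h
    exact mul_inv_eq_one.mp h
  have h2 : a ^ 3 = (a * b) ^ 2 := by
    have h := hrel _ (Or.inr rfl)
    rw [map_mul, map_pow, map_inv, map_pow, map_mul] at h
    exact mul_inv_eq_one.mp h
  have hab : a = b ^ 2 := by
    have h : a ^ 2 * a = a ^ 2 * b ^ 2 := by
      rw [← pow_succ]
      rw [mul_pow] at h2
      exact h2
    exact mul_left_cancel h
  have hb1 : b = 1 := by
    have h : b ^ 5 * b = b ^ 5 * 1 := by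
      rw [mul_one, ← pow_succ, ← h1, hab, ← pow_mul]
    exact mul_left_cancel h
  have ha1 : a = 1 := by rw [hab, hb1, one_pow]
  have hφ : φ = 1 := by
    ext i
    fin_cases i
    · exact ha1
    · exact hb1
  have hsurj : Function.Surjective φ := by
    intro z
    obtain ⟨g, rfl⟩ := QuotientGroup.mk_surjective z
    obtain ⟨w, rfl⟩ := QuotientGroup.mk'_surjective _ g
    exact ⟨w, rfl⟩
  constructor
  intro x y
  obtain ⟨u, rfl⟩ := hsurj x
  obtain ⟨v, rfl⟩ := hsurj y
  rw [hφ]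
  rfl
end

section
/- There do not exist elements of ℤ[t,t^{-1}] generating the ideal (3, t+1) as a principal ideal; that is, there is no a ∈ ℤ[t,t^{-1}] with Ideal.span {a} = Ideal.span {3, t+1}, so the ideal (3, t+1) of ℤ[t,t^{-1}] cannot be generated by fewer than 2 elements. -/
open LaurentPolynomial

noncomputable section Stmt14Aux

/-- The monoid hom `Multiplicative ℤ →* (ZMod 3)[T;T⁻¹]`, `n ↦ T n`. -/
def myT : Multiplicative ℤ →* LaurentPolynomial (ZMod 3) where
  toFun n := T (Multiplicative.toAdd n)
  map_one' := by simp
  map_mul' a b := by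
    show T (Multiplicative.toAdd a + Multiplicative.toAdd b) = _
    rw [T_add]

/-- Reduction of coefficients mod 3. -/
def θ : LaurentPolynomial ℤ →ₐ[ℤ] LaurentPolynomial (ZMod 3) :=
  AddMonoidAlgebra.lift ℤ (LaurentPolynomial (ZMod 3)) ℤ myT

lemma intCast_eq_C (r : ℤ) : ((r : LaurentPolynomial (ZMod 3))) = C ((r : ZMod 3)) := by
  have : ((C : ZMod 3 →+* LaurentPolynomial (ZMod 3)).comp (Int.castRingHom (ZMod 3))) r
      = (r : LaurentPolynomial (ZMod 3)) := eq_intCast _ r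
  rw [← this, RingHom.comp_apply, eq_intCast]

lemma θ_single (n : ℤ) (r : ℤ) :
    θ (AddMonoidAlgebra.single n r) = AddMonoidAlgebra.single n ((r : ZMod 3)) := by
  rw [θ, AddMonoidAlgebra.lift_single]
  show r • T n = _
  rw [single_eq_C_mul_T, zsmul_eq_mul, intCast_eq_C]

lemma θ_apply (x : LaurentPolynomial ℤ) (n : ℤ) : (θ x).coeff n = ((x.coeff n : ZMod 3)) := by
  induction x using AddMonoidAlgebra.induction_linear with
  | zero => simp
  | add f g hf hg =>
      rw [map_add]
      show (θ f + θ g).coeff n = _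
      rw [AddMonoidAlgebra.coeff_add, Finsupp.add_apply, AddMonoidAlgebra.coeff_add,
        Finsupp.add_apply, hf, hg, Int.cast_add]
  | single a b =>
      rw [θ_single, AddMonoidAlgebra.coeff_single, AddMonoidAlgebra.coeff_single,
        Finsupp.single_apply, Finsupp.single_apply]
      split <;> simp

lemma three_dvd_of_θ_eq_zero {x : LaurentPolynomial ℤ} (h : θ x = 0) :
    (3 : LaurentPolynomial ℤ) ∣ x := by
  have hco : ∀ n : ℤ, (3 : ℤ) ∣ x.coeff n := by
    intro n
    have := θ_apply x n
    rw [h] at this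
    simp only [AddMonoidAlgebra.coeff_zero, Finsupp.coe_zero, Pi.zero_apply] at this
    exact (ZMod.intCast_zmod_eq_zero_iff_dvd _ 3).mp this.symm
  refine ⟨AddMonoidAlgebra.ofCoeff (Finsupp.mapRange (· / 3) (by simp) x.coeff), ?_⟩
  have h3 : (3 : LaurentPolynomial ℤ) = ((3 : ℤ) : LaurentPolynomial ℤ) := by norm_num
  rw [h3, ← zsmul_eq_mul]
  apply LaurentPolynomial.ext; intro n
  rw [AddMonoidAlgebra.coeff_smul_apply, AddMonoidAlgebra.coeff_ofCoeff,
    Finsupp.mapRange_apply, smul_eq_mul]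
  exact (Int.mul_ediv_cancel' (hco n)).symm

lemma θ_three : θ 3 = 0 := by
  have h1 : θ 3 = 3 := map_ofNat θ 3
  have h2 : (3 : LaurentPolynomial (ZMod 3)) = C 3 := by
    rw [show ((3:ZMod 3)) = ((3:ℤ) : ZMod 3) by norm_num, ← intCast_eq_C]
    norm_num
  rw [h1, h2, show ((3:ZMod 3)) = 0 by decide, map_zero]

lemma θ_Tone_ne : θ (T 1 + 1) ≠ 0 := by
  intro h
  have h0 := θ_apply (T 1 + 1) 0
  have hc : ((T 1 + 1 : LaurentPolynomial ℤ)).coeff 0 = 1 := by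
    show ((T 1 : LaurentPolynomial ℤ) + 1).coeff 0 = 1
    rw [AddMonoidAlgebra.coeff_add, Finsupp.add_apply, T_apply, ← single_zero_one_eq_one,
      AddMonoidAlgebra.coeff_single, Finsupp.single_apply]
    simp
  rw [h, hc] at h0
  simp only [AddMonoidAlgebra.coeff_zero, Finsupp.coe_zero, Pi.zero_apply] at h0
  exact one_ne_zero h0.symm

lemma laurent_three_ne_zero : (3 : LaurentPolynomial ℤ) ≠ 0 := by
  intro h
  have h3 : (C (3:ℤ) : LaurentPolynomial ℤ) = 0 := by
    rw [eq_intCast (C : ℤ →+* LaurentPolynomial ℤ) 3,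
      show ((3:ℤ) : LaurentPolynomial ℤ) = 3 by norm_num, h]
  have h4 : (C (3:ℤ) : LaurentPolynomial ℤ).coeff 0 = (0 : LaurentPolynomial ℤ).coeff 0 := by rw [h3]
  rw [C_apply] at h4
  simp at h4

/-- Evaluation at `-1`, a ring hom `ℤ[T;T⁻¹] → ℤ`. -/
def ε : LaurentPolynomial ℤ →ₐ[ℤ] ℤ :=
  AddMonoidAlgebra.lift ℤ ℤ ℤ ((Units.coeHom ℤ).comp (zpowersHom ℤˣ (-1)))

lemma ε_Tone : ε (T 1 + 1) = 0 := by
  have h1 : ε (T 1) = -1 := by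
    rw [show (T 1 : LaurentPolynomial ℤ) = AddMonoidAlgebra.single 1 1 from rfl,
      ε, AddMonoidAlgebra.lift_single]
    simp
  rw [map_add, h1, map_one]
  ring

end Stmt14Aux

theorem stmt14 :
    ¬ ∃ a : LaurentPolynomial ℤ,
      Ideal.span {a} = Ideal.span {(3 : LaurentPolynomial ℤ), T 1 + 1} := by
  rintro ⟨a, ha⟩
  have h3 : (3 : LaurentPolynomial ℤ) ∈ Ideal.span {a} := by
    rw [ha]; exact Ideal.subset_span (by simp)
  have ht : (T 1 + 1 : LaurentPolynomial ℤ) ∈ Ideal.span {a} := by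
    rw [ha]; exact Ideal.subset_span (by simp)
  rw [Ideal.mem_span_singleton] at h3 ht
  obtain ⟨c, hc⟩ := h3
  obtain ⟨d, hd⟩ := ht
  by_cases hθa : θ a = 0
  · -- then 3 ∣ a, so 3 ∣ T 1 + 1, so θ (T 1 + 1) = 0, contradiction
    obtain ⟨e, he⟩ := three_dvd_of_θ_eq_zero hθa
    apply θ_Tone_ne
    rw [hd, he, mul_assoc, map_mul, θ_three, zero_mul]
  · -- θ c = 0, so 3 ∣ c, cancel 3 to get a unit, so whole ring, contradiction via ε
    have hθc : θ c = 0 := by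
      have := congrArg θ hc
      rw [θ_three, map_mul] at this
      rcases mul_eq_zero.mp this.symm with h | h
      · exact absurd h hθa
      · exact h
    obtain ⟨c', hc'⟩ := three_dvd_of_θ_eq_zero hθc
    have hu : a * c' = 1 := by
      apply mul_left_cancel₀ laurent_three_ne_zero
      rw [mul_one]
      calc (3 : LaurentPolynomial ℤ) * (a * c') = a * (3 * c') := by ring
        _ = a * c := by rw [← hc']
        _ = 3 := hc.symm
    have hone : (1 : LaurentPolynomial ℤ) ∈ Ideal.span {(3 : LaurentPolynomial ℤ), T 1 + 1} := by
      rw [← ha, Ideal.mem_span_singleton]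
      exact ⟨c', hu.symm⟩
    rw [Ideal.mem_span_pair] at hone
    obtain ⟨u, v, huv⟩ := hone
    have := congrArg ε huv
    rw [map_one, map_add, map_mul, map_mul, ε_Tone, mul_zero, add_zero,
      show ε 3 = 3 from map_ofNat ε 3] at this
    omega
end
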